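/- Let D be a digraph obtained from a directed cycle C⃗_n by adding k ≥ 1 chords (x_i, y_i), i = 1,…,k, with 1 < y_1 < x_1 < y_2 < x_2 < ⋯ < y_k < x_k ≤ n (vertices of the cycle labeled 1,…,n along the cycle direction). Then the induced strongly connected proper subdigraphs of D are exactly the isolated vertices and the k directed cycles induced by the vertex intervals [y_i, x_i]; consequently D has exactly three complementarity eigenvalues {0, 1, ρ(D)}. -/

import Mathlib

open Matrix
open scoped Classical

noncomputable section

/-- Adjacency matrix of a digraph given by an arc relation `E`. -/
def adjMat {V : Type*} (E : V → V → Prop) : Matrix V V ℝ :=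
  Matrix.of fun i j => if E i j then (1 : ℝ) else 0

/-- Spectral radius of a real square matrix: the largest modulus of a (complex) eigenvalue. -/
def matSpecRad {n : Type*} [Fintype n] (A : Matrix n n ℝ) : ℝ :=
  sSup {r : ℝ | ∃ μ ∈ spectrum ℂ (A.map (fun x => (x : ℂ))), r = ‖μ‖}

/-- Spectral radius of a digraph. -/
def rho {V : Type*} [Fintype V] (E : V → V → Prop) : ℝ :=
  matSpecRad (adjMat E)

/-- The complementarity spectrum of a real square matrix. -/
def compSpec {n : Type*} [Fintype n] (A : Matrix n n ℝ) : Set ℝ :=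
  {lam | ∃ x : n → ℝ, x ≠ 0 ∧ 0 ≤ x ∧ 0 ≤ A.mulVec x - lam • x ∧
    x ⬝ᵥ (A.mulVec x - lam • x) = 0}

/-- Reachability by directed paths. -/
def Reach {V : Type*} (E : V → V → Prop) : V → V → Prop :=
  Relation.ReflTransGen E

/-- A digraph is strongly connected if every vertex reaches every other one. -/
def StronglyConnected {V : Type*} (E : V → V → Prop) : Prop :=
  ∀ u v, Reach E u v

/-- Induced subdigraph on a vertex subset `S`. -/
def induceRel {V : Type*} (E : V → V → Prop) (S : Set V) : S → S → Prop :=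
  fun a b => E a.1 b.1

/-- Spectral radius of the induced subdigraph on `S`. -/
def specRadOn {V : Type*} [Fintype V] (E : V → V → Prop) (S : Set V) : ℝ :=
  @rho S (Set.Finite.fintype S.toFinite) (induceRel E S)

/-- Complementarity spectrum of the induced subdigraph on `S`. -/
def compSpecOn {V : Type*} [Fintype V] (E : V → V → Prop) (S : Set V) : Set ℝ :=
  @compSpec S (Set.Finite.fintype S.toFinite) (adjMat (induceRel E S))

/-- Isomorphism of digraphs. -/
def IsoDigraph {V W : Type*} (E : V → V → Prop) (F : W → W → Prop) : Prop :=
  ∃ e : V ≃ W, ∀ a b, E a b ↔ F (e a) (e b)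

/-- The directed cycle on `n` vertices. -/
def cycleRel (n : ℕ) : ZMod n → ZMod n → Prop := fun i j => j = i + 1

/-- A digraph is a directed cycle if it is isomorphic to some `C⃗_n`, `n ≥ 2`. -/
def IsCycleDigraph {V : Type*} (E : V → V → Prop) : Prop :=
  ∃ n : ℕ, 2 ≤ n ∧ IsoDigraph E (cycleRel n)

/-- A digraph is acyclic if it has no directed cycle. -/
def Acyclic {V : Type*} (E : V → V → Prop) : Prop :=
  ∀ v, ¬ Relation.TransGen E v v

/-- Strongly connected component of the vertex `v`. -/
def component {V : Type*} (E : V → V → Prop) (v : V) : Set V :=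
  {u | Reach E u v ∧ Reach E v u}

/-- `D` has an `∞(r,s)`-subdigraph: two directed cycles of lengths `r` and `s`
sharing exactly one vertex, all of whose arcs are arcs of `D`. -/
def InftySub {V : Type*} (E : V → V → Prop) (r s : ℕ) : Prop :=
  ∃ (f : ZMod r → V) (g : ZMod s → V),
    Function.Injective f ∧ Function.Injective g ∧ f 0 = g 0 ∧
    Set.range f ∩ Set.range g = {f 0} ∧
    (∀ i, E (f i) (f (i + 1))) ∧ (∀ j, E (g j) (g (j + 1)))

/-- `D` has a `θ(a,b,c)`-subdigraph: three internally disjoint directed paths,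
two from `v` to `w` (of lengths `a+1` and `b+1`) and one from `w` to `v`
(of length `c+1`), all of whose arcs are arcs of `D`. -/
def ThetaSub {V : Type*} (E : V → V → Prop) (a b c : ℕ) : Prop :=
  ∃ (P : Fin (a + 2) → V) (Q : Fin (b + 2) → V) (R : Fin (c + 2) → V),
    Function.Injective P ∧ Function.Injective Q ∧ Function.Injective R ∧
    P 0 = Q 0 ∧ Q 0 = R (Fin.last (c + 1)) ∧
    P (Fin.last (a + 1)) = Q (Fin.last (b + 1)) ∧ Q (Fin.last (b + 1)) = R 0 ∧
    (∀ i j, P i = Q j → (i = 0 ∧ j = 0) ∨ (i = Fin.last (a + 1) ∧ j = Fin.last (b + 1))) ∧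
    (∀ i j, P i = R j → (i = 0 ∧ j = Fin.last (c + 1)) ∨ (i = Fin.last (a + 1) ∧ j = 0)) ∧
    (∀ i j, Q i = R j → (i = 0 ∧ j = Fin.last (c + 1)) ∨ (i = Fin.last (b + 1) ∧ j = 0)) ∧
    (∀ i : Fin (a + 1), E (P i.castSucc) (P i.succ)) ∧
    (∀ i : Fin (b + 1), E (Q i.castSucc) (Q i.succ)) ∧
    (∀ i : Fin (c + 1), E (R i.castSucc) (R i.succ))

/-- `D` is (isomorphic to) the `∞(r,s)` digraph: the coalescence of the directed
cycles `C⃗_r` and `C⃗_s` at one vertex, with no further vertices or arcs. -/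
def IsInftyDigraph {V : Type*} (E : V → V → Prop) (r s : ℕ) : Prop :=
  ∃ (f : ZMod r → V) (g : ZMod s → V),
    Function.Injective f ∧ Function.Injective g ∧ f 0 = g 0 ∧
    Set.range f ∩ Set.range g = {f 0} ∧
    Set.range f ∪ Set.range g = Set.univ ∧
    ∀ u v, E u v ↔ ((∃ i, u = f i ∧ v = f (i + 1)) ∨ (∃ j, u = g j ∧ v = g (j + 1)))

/-- `D` is (isomorphic to) the `θ(a,b,c)` digraph: three internally disjoint
directed paths, two from `v` to `w` and one from `w` to `v`, with no further
vertices or arcs. -/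
def IsThetaDigraph {V : Type*} (E : V → V → Prop) (a b c : ℕ) : Prop :=
  ∃ (P : Fin (a + 2) → V) (Q : Fin (b + 2) → V) (R : Fin (c + 2) → V),
    Function.Injective P ∧ Function.Injective Q ∧ Function.Injective R ∧
    P 0 = Q 0 ∧ Q 0 = R (Fin.last (c + 1)) ∧
    P (Fin.last (a + 1)) = Q (Fin.last (b + 1)) ∧ Q (Fin.last (b + 1)) = R 0 ∧
    (∀ i j, P i = Q j → (i = 0 ∧ j = 0) ∨ (i = Fin.last (a + 1) ∧ j = Fin.last (b + 1))) ∧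
    (∀ i j, P i = R j → (i = 0 ∧ j = Fin.last (c + 1)) ∨ (i = Fin.last (a + 1) ∧ j = 0)) ∧
    (∀ i j, Q i = R j → (i = 0 ∧ j = Fin.last (c + 1)) ∨ (i = Fin.last (b + 1) ∧ j = 0)) ∧
    Set.range P ∪ Set.range Q ∪ Set.range R = Set.univ ∧
    (∀ u v, E u v ↔
      ((∃ i : Fin (a + 1), u = P i.castSucc ∧ v = P i.succ) ∨
       (∃ i : Fin (b + 1), u = Q i.castSucc ∧ v = Q i.succ) ∨
       (∃ i : Fin (c + 1), u = R i.castSucc ∧ v = R i.succ)))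

/-- The directed cycle `0 → 1 → ⋯ → n-1 → 0` together with the chords `(x i, y i)`. -/
def cyclePlusChords (n k : ℕ) (x y : Fin k → Fin n) : Fin n → Fin n → Prop :=
  fun u v => (u.val + 1 = v.val) ∨ (u.val = n - 1 ∧ v.val = 0) ∨ (∃ i, u = x i ∧ v = y i)

/-!
The strongly connected induced subdigraphs are located by a gap argument: a proper vertex set `T`
in which every vertex keeps an out-neighbour contains a vertex whose cycle successor leaves `T`,
so that vertex is the tail `x m` of a chord whose head `y m` lies in `T`; the interleaving of the
chords then forces the whole interval `[y m, x m]` into `T`, and strong connectivity forces `T`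
back into that interval.

The same gap argument applies to the support of a complementarity eigenvector for `lam ≠ 0`: on
a proper support the eigen-relation travels once around an induced cycle, so `lam = 1`; on the
full support the eigenvector is positive and `lam` is the spectral radius by a Collatz–Wielandt
comparison. A positive eigenvector of `A(D)` is written down explicitly, its eigenvalue being a
root of a one-variable equation found by the intermediate value theorem on `[1, 2]`.
-/

theorem Matrix.mem_spectrum_iff_exists_mulVec_eq_smul {N K : Type*} [Field K] [Fintype N]
    [DecidableEq N] (M : Matrix N N K) (μ : K) :
    μ ∈ spectrum K M ↔ ∃ w, w ≠ 0 ∧ M *ᵥ w = μ • w := by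
  rw [← Matrix.spectrum_toLin', ← Module.End.hasEigenvalue_iff_mem_spectrum]
  constructor
  · intro hμ
    obtain ⟨w, hw⟩ := hμ.exists_hasEigenvector
    exact ⟨w, hw.2, by simpa using hw.apply_eq_smul⟩
  · rintro ⟨w, hw, hMw⟩
    exact Module.End.hasEigenvalue_of_hasEigenvector
      ⟨Module.End.mem_eigenspace_iff.2 (by simpa using hMw), hw⟩

section PositiveEigenvector

variable {N : Type*} [Fintype N] {A : Matrix N N ℝ} {v : N → ℝ} {r : ℝ}

theorem nonneg_of_pos_eigenvector [Nonempty N] (hA : ∀ i j, 0 ≤ A i j) (hv : ∀ i, 0 < v i)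
    (hAv : A *ᵥ v = r • v) : 0 ≤ r := by
  obtain ⟨i⟩ := ‹Nonempty N›
  have hi : 0 ≤ r * v i := by
    rw [← smul_eq_mul, ← Pi.smul_apply, ← hAv]
    exact Finset.sum_nonneg fun j _ => mul_nonneg (hA i j) (hv j).le
  exact nonneg_of_mul_nonneg_left hi (hv i)

/-- Collatz–Wielandt: compare an eigenvector `w` with `t • v`, where `t` is the largest ratio
`‖w i‖ / v i`, at an index where that ratio is attained. -/
theorem norm_le_of_mem_spectrum_of_pos_eigenvector [DecidableEq N] (hA : ∀ i j, 0 ≤ A i j)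
    (hv : ∀ i, 0 < v i) (hAv : A *ᵥ v = r • v) {μ : ℂ}
    (hμ : μ ∈ spectrum ℂ (A.map ((↑) : ℝ → ℂ))) : ‖μ‖ ≤ r := by
  obtain ⟨w, hw, hAw⟩ := (Matrix.mem_spectrum_iff_exists_mulVec_eq_smul _ μ).1 hμ
  obtain ⟨j, hj⟩ := Function.ne_iff.1 hw
  obtain ⟨i, -, hi⟩ := Finset.exists_max_image Finset.univ (fun i => ‖w i‖ / v i)
    ⟨j, Finset.mem_univ j⟩
  set t := ‖w i‖ / v i
  have hbound : ∀ l, ‖w l‖ ≤ t * v l := fun l =>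
    (div_le_iff₀ (hv l)).1 (hi l (Finset.mem_univ l))
  have hwi : 0 < ‖w i‖ := by
    have hj' : 0 < ‖w j‖ / v j := div_pos (norm_pos_iff.2 hj) (hv j)
    have ht : 0 < t := hj'.trans_le (hi j (Finset.mem_univ j))
    exact (div_pos_iff_of_pos_right (hv i)).1 ht
  refine le_of_mul_le_mul_right ?_ hwi
  calc ‖μ‖ * ‖w i‖ = ‖∑ l, (A i l : ℂ) * w l‖ := by
        rw [← norm_mul, ← smul_eq_mul, ← Pi.smul_apply, ← hAw]
        simp [Matrix.mulVec, dotProduct]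
    _ ≤ ∑ l, A i l * ‖w l‖ := by
        refine (norm_sum_le _ _).trans_eq (Finset.sum_congr rfl fun l _ => ?_)
        rw [norm_mul, Complex.norm_real, Real.norm_of_nonneg (hA i l)]
    _ ≤ ∑ l, A i l * (t * v l) :=
        Finset.sum_le_sum fun l _ => mul_le_mul_of_nonneg_left (hbound l) (hA i l)
    _ = t * (A *ᵥ v) i := by
        simp only [Matrix.mulVec, dotProduct, Finset.mul_sum]
        exact Finset.sum_congr rfl fun l _ => by ring
    _ = r * ‖w i‖ := by
        rw [hAv, Pi.smul_apply, smul_eq_mul, mul_left_comm, div_mul_cancel₀ _ (hv i).ne']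

theorem matSpecRad_eq_of_pos_eigenvector [Nonempty N] (hA : ∀ i j, 0 ≤ A i j)
    (hv : ∀ i, 0 < v i) (hAv : A *ᵥ v = r • v) : matSpecRad A = r := by
  refine IsGreatest.csSup_eq ⟨⟨r, ?_, ?_⟩, ?_⟩
  · refine (Matrix.mem_spectrum_iff_exists_mulVec_eq_smul _ _).2
      ⟨fun i => (v i : ℂ), fun h0 => ?_, ?_⟩
    · obtain ⟨i⟩ := ‹Nonempty N›
      exact (hv i).ne' (by simpa using congrFun h0 i)
    · ext i
      have := congrFun hAv i
      simp only [Matrix.mulVec, dotProduct, Pi.smul_apply, smul_eq_mul, Matrix.map_apply]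
        at this ⊢
      exact_mod_cast this
  · rw [Complex.norm_real, Real.norm_of_nonneg (nonneg_of_pos_eigenvector hA hv hAv)]
  · rintro _ ⟨μ, hμ, rfl⟩
    exact norm_le_of_mem_spectrum_of_pos_eigenvector hA hv hAv hμ

end PositiveEigenvector

theorem mem_compSpec_iff_of_nonneg {N : Type*} [Fintype N] {A : Matrix N N ℝ}
    (hA : ∀ i j, 0 ≤ A i j) {lam : ℝ} :
    lam ∈ compSpec A ↔
      ∃ z : N → ℝ, z ≠ 0 ∧ 0 ≤ z ∧ ∀ i, z i ≠ 0 → (A *ᵥ z) i = lam * z i := by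
  constructor
  · rintro ⟨z, hz, hz0, hslack, hcompl⟩
    have hterm : ∀ i, z i * (A *ᵥ z - lam • z) i = 0 := fun i =>
      (Finset.sum_eq_zero_iff_of_nonneg fun i _ => mul_nonneg (hz0 i) (hslack i)).1 hcompl i
        (Finset.mem_univ i)
    refine ⟨z, hz, hz0, fun i hi => ?_⟩
    have := (mul_eq_zero.1 (hterm i)).resolve_left hi
    simpa [sub_eq_zero] using this
  · rintro ⟨z, hz, hz0, heq⟩
    have hterm : ∀ i, z i = 0 ∨ (A *ᵥ z - lam • z) i = 0 := fun i => by
      by_cases hi : z i = 0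
      · exact Or.inl hi
      · exact Or.inr (by simp [heq i hi])
    refine ⟨z, hz, hz0, fun i => ?_, Finset.sum_eq_zero fun i _ => ?_⟩
    · rcases hterm i with hi | hi
      · simpa [hi, Matrix.mulVec, dotProduct] using
          Finset.sum_nonneg fun j _ => mul_nonneg (hA i j) (hz0 j)
      · exact hi.ge
    · rcases hterm i with hi | hi <;> simp [hi]

theorem adjMat_nonneg {V : Type*} (E : V → V → Prop) (i j : V) : 0 ≤ adjMat E i j := by
  simp only [adjMat, Matrix.of_apply]
  split_ifs <;> norm_num

section adjMat

variable {V : Type*} [Fintype V] (E : V → V → Prop)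

theorem adjMat_mulVec_apply (f : V → ℝ) (u : V) :
    (adjMat E *ᵥ f) u = ∑ w ∈ Finset.univ.filter (E u), f w := by
  simp [adjMat, Matrix.mulVec, dotProduct, Finset.sum_filter]

theorem exists_adj_of_adjMat_mulVec_ne_zero {f : V → ℝ} {u : V}
    (h : (adjMat E *ᵥ f) u ≠ 0) :
    ∃ w, E u w ∧ f w ≠ 0 := by
  rw [adjMat_mulVec_apply] at h
  obtain ⟨w, hw, hfw⟩ := Finset.exists_ne_zero_of_sum_ne_zero h
  exact ⟨w, (Finset.mem_filter.1 hw).2, hfw⟩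

theorem zero_mem_compSpec_adjMat {j : V} (hj : ¬ E j j) : (0 : ℝ) ∈ compSpec (adjMat E) := by
  refine (mem_compSpec_iff_of_nonneg (adjMat_nonneg E)).2
    ⟨Pi.single j 1, fun h => by simpa using congrFun h j, fun i => ?_, fun i hi => ?_⟩
  · by_cases hij : i = j <;> simp [hij]
  · obtain rfl : i = j := by by_contra hij; simp [hij] at hi
    simp [adjMat, hj]

theorem mem_compSpec_adjMat_of_pos_eigenvector {v : V → ℝ} {r : ℝ} [Nonempty V]
    (hv : ∀ i, 0 < v i) (hAv : adjMat E *ᵥ v = r • v) : r ∈ compSpec (adjMat E) := by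
  obtain ⟨i⟩ := ‹Nonempty V›
  refine (mem_compSpec_iff_of_nonneg (adjMat_nonneg E)).2
    ⟨v, fun h => (hv i).ne' (congrFun h i), fun j => (hv j).le, fun j _ => ?_⟩
  rw [hAv, Pi.smul_apply, smul_eq_mul]

end adjMat

section Digraph

variable {V : Type*} {E : V → V → Prop}

theorem stronglyConnected_induceRel_singleton (v : V) :
    StronglyConnected (induceRel E {v}) := fun a b => by
  obtain rfl : a = b := Subtype.ext (a.2.trans b.2.symm)
  exact Relation.ReflTransGen.refl

theorem StronglyConnected.exists_adj {S : Set V} (hS : StronglyConnected (induceRel E S))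
    {a b : V} (ha : a ∈ S) (hb : b ∈ S) (hab : a ≠ b) {u : V} (hu : u ∈ S) :
    ∃ w ∈ S, E u w := by
  obtain ⟨t, ht, hut⟩ : ∃ t ∈ S, u ≠ t := by
    by_cases hua : u = a
    · exact ⟨b, hb, hua ▸ hab⟩
    · exact ⟨a, ha, hua⟩
  rcases (hS ⟨u, hu⟩ ⟨t, ht⟩).cases_head with h | ⟨w, huw, -⟩
  · exact absurd (congrArg Subtype.val h) hut
  · exact ⟨w.1, w.2, huw⟩

theorem mem_of_reach_induceRel {S C : Set V} (hC : ∀ u ∈ C, ∀ w ∈ S, E u w → w ∈ C)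
    {a b : S} (hab : Reach (induceRel E S) a b) (ha : a.1 ∈ C) : b.1 ∈ C := by
  induction hab with
  | refl => exact ha
  | tail _ hcd ih => exact hC _ ih _ (Subtype.prop _) hcd

end Digraph

theorem Fin.val_finRotate {n : ℕ} (u : Fin n) :
    (finRotate n u).val = if u.val + 1 = n then 0 else u.val + 1 := by
  cases n with
  | zero => exact u.elim0
  | succ n =>
    rw [coe_finRotate]
    simp [Fin.ext_iff]

theorem Fin.val_finRotate_of_lt {n : ℕ} {u : Fin n} (hu : u.val + 1 < n) :
    (finRotate n u).val = u.val + 1 := by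
  rw [Fin.val_finRotate, if_neg hu.ne]

theorem Fin.exists_mem_finRotate_notMem {n : ℕ} {T : Set (Fin n)} (hT : T.Nonempty)
    (hT' : T ≠ Set.univ) : ∃ u ∈ T, finRotate n u ∉ T := by
  obtain ⟨a, ha⟩ := hT
  obtain ⟨b, hb⟩ := (Set.ne_univ_iff_exists_notMem T).1 hT'
  have hn : 2 ≤ n := by
    have : a.val ≠ b.val := fun h => hb (Fin.ext h ▸ ha)
    omega
  by_contra! hclosed
  have hpow : ∀ i : ℕ, (finRotate n ^ i) a ∈ T := fun i => by
    induction i with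
    | zero => exact ha
    | succ i ih => rw [pow_succ', Equiv.Perm.mul_apply]; exact hclosed _ ih
  have hsupp : ∀ u, finRotate n u ≠ u := fun u => by
    rw [← Equiv.Perm.mem_support, support_finRotate_of_le hn]
    exact Finset.mem_univ u
  obtain ⟨i, hi⟩ := (isCycle_finRotate_of_le hn).exists_pow_eq (hsupp a) (hsupp b)
  exact hb (hi ▸ hpow i)

theorem Fin.interval_induction {n a b : ℕ} {P : Fin n → Prop}
    (base : ∀ v : Fin n, v.val = a → P v)
    (step : ∀ v w : Fin n, a ≤ v.val → v.val < b → w.val = v.val + 1 → P v → P w) :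
    ∀ v : Fin n, a ≤ v.val → v.val ≤ b → P v := by
  suffices h : ∀ d, ∀ v : Fin n, v.val = a + d → v.val ≤ b → P v from
    fun v hav hvb => h (v.val - a) v (by omega) hvb
  intro d
  induction d with
  | zero => exact fun v hv _ => base v hv
  | succ d ih =>
    intro v hv hvb
    exact step ⟨a + d, by omega⟩ v (by simp) (by simp; omega) (by simp; omega)
      (ih _ rfl (by simp; omega))

theorem cyclePlusChords_iff {n k : ℕ} {x y : Fin k → Fin n} {u v : Fin n} :
    cyclePlusChords n k x y u v ↔ v = finRotate n u ∨ ∃ i, u = x i ∧ v = y i := by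
  rw [cyclePlusChords, ← or_assoc, Fin.ext_iff, Fin.val_finRotate]
  refine or_congr_left ?_
  have := u.isLt
  split_ifs <;> omega

theorem cyclePlusChords_iff_of_forall_ne {n k : ℕ} {x y : Fin k → Fin n} {u v : Fin n}
    (hu : ∀ m, x m ≠ u) : cyclePlusChords n k x y u v ↔ v = finRotate n u := by
  rw [cyclePlusChords_iff, or_iff_left]
  rintro ⟨m, rfl, -⟩
  exact hu m rfl

theorem adjMat_cyclePlusChords_mulVec_apply_of_forall_ne {n k : ℕ} {x y : Fin k → Fin n}
    (f : Fin n → ℝ) {u : Fin n} (hu : ∀ m, x m ≠ u) :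
    (adjMat (cyclePlusChords n k x y) *ᵥ f) u = f (finRotate n u) := by
  rw [adjMat_mulVec_apply, ← Finset.sum_singleton f (finRotate n u)]
  congr 1
  ext w
  simp [cyclePlusChords_iff_of_forall_ne hu]

def chordInterval {n k : ℕ} (x y : Fin k → Fin n) (m : Fin k) : Set (Fin n) :=
  {v | (y m).val ≤ v.val ∧ v.val ≤ (x m).val}

theorem reach_induceRel_chordInterval_of_le {n k : ℕ} {x y : Fin k → Fin n} {m : Fin k}
    {u v : chordInterval x y m} (huv : u.1.val ≤ v.1.val) :
    Reach (induceRel (cyclePlusChords n k x y) (chordInterval x y m)) u v := by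
  suffices ∀ w : Fin n, u.1.val ≤ w.val → w.val ≤ (x m).val →
      ∀ hw : w ∈ chordInterval x y m, Reach (induceRel _ _) u ⟨w, hw⟩ from
    this v.1 huv v.2.2 v.2
  refine Fin.interval_induction (fun w hw hwI => ?_) (fun w w' huw hwx hw' ih hw'I => ?_)
  · rw [show (⟨w, hwI⟩ : chordInterval x y m) = u from Subtype.ext (Fin.ext hw)]
    exact Relation.ReflTransGen.refl
  · have hwI : w ∈ chordInterval x y m := ⟨u.2.1.trans huw, hwx.le⟩
    refine (ih hwI).tail ?_
    show cyclePlusChords n k x y w w'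
    exact Or.inl hw'.symm

structure ChordsInterleaved {n k : ℕ} (x y : Fin k → Fin n) : Prop where
  pos : ∀ i, 0 < (y i).val
  lt : ∀ i, (y i).val < (x i).val
  interleave : ∀ i j : Fin k, (i : ℕ) < (j : ℕ) → (x i).val < (y j).val

namespace ChordsInterleaved

variable {n k : ℕ} {x y : Fin k → Fin n}

theorem eq_of_mem_chordInterval (h : ChordsInterleaved x y) {l m : Fin k}
    (hl : x l ∈ chordInterval x y m) : l = m := by
  obtain ⟨hyl, hlx⟩ := hl
  rcases lt_trichotomy (l : ℕ) m with hlm | hlm | hlm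
  · exact absurd (h.interleave l m hlm) (by omega)
  · exact Fin.ext hlm
  · have := h.interleave m l hlm
    have := h.lt l
    omega

theorem x_mem_chordInterval (h : ChordsInterleaved x y) (m : Fin k) :
    x m ∈ chordInterval x y m :=
  ⟨(h.lt m).le, le_rfl⟩

theorem y_mem_chordInterval (h : ChordsInterleaved x y) (m : Fin k) :
    y m ∈ chordInterval x y m :=
  ⟨le_rfl, (h.lt m).le⟩

theorem injective (h : ChordsInterleaved x y) : Function.Injective x := fun _ m hlm =>
  h.eq_of_mem_chordInterval (hlm ▸ h.x_mem_chordInterval m)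

theorem forall_ne_of_lt (h : ChordsInterleaved x y) {m : Fin k} {v : Fin n}
    (hyv : (y m).val ≤ v.val) (hvx : v.val < (x m).val) : ∀ l, x l ≠ v := by
  rintro l rfl
  obtain rfl := h.eq_of_mem_chordInterval ⟨hyv, hvx.le⟩
  exact hvx.ne rfl

theorem finRotate_notMem_chordInterval (h : ChordsInterleaved x y) (m : Fin k) :
    finRotate n (x m) ∉ chordInterval x y m := by
  have := h.pos m
  rw [chordInterval, Set.mem_ofPred_eq, Fin.val_finRotate]
  split_ifs <;> omega

theorem not_cyclePlusChords_self (h : ChordsInterleaved x y) (m : Fin k) :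
    ¬ cyclePlusChords n k x y (x m) (x m) := by
  rw [cyclePlusChords_iff]
  rintro (h' | ⟨l, hl, hl'⟩)
  · exact h.finRotate_notMem_chordInterval m (h' ▸ h.x_mem_chordInterval m)
  · have := h.lt l
    rw [← hl, ← hl'] at this
    exact this.false

theorem cyclePlusChords_chord_iff (h : ChordsInterleaved x y) (m : Fin k) {w : Fin n} :
    cyclePlusChords n k x y (x m) w ↔ w = finRotate n (x m) ∨ w = y m := by
  rw [cyclePlusChords_iff]
  refine or_congr_right ⟨?_, fun hw => ⟨m, rfl, hw⟩⟩
  rintro ⟨l, hl, rfl⟩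
  rw [h.injective hl]

theorem adjMat_mulVec_apply_chord (h : ChordsInterleaved x y) (f : Fin n → ℝ) (m : Fin k) :
    (adjMat (cyclePlusChords n k x y) *ᵥ f) (x m) = f (finRotate n (x m)) + f (y m) := by
  have hne : finRotate n (x m) ≠ y m := fun he =>
    h.finRotate_notMem_chordInterval m (he ▸ h.y_mem_chordInterval m)
  rw [adjMat_mulVec_apply, ← Finset.sum_pair hne]
  congr 1
  ext w
  simp [h.cyclePlusChords_chord_iff]

theorem adjMat_mulVec_apply_of_lt (h : ChordsInterleaved x y) (f : Fin n → ℝ) {m : Fin k}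
    {v : Fin n} (hyv : (y m).val ≤ v.val) (hvx : v.val < (x m).val) :
    (adjMat (cyclePlusChords n k x y) *ᵥ f) v = f (finRotate n v) :=
  adjMat_cyclePlusChords_mulVec_apply_of_forall_ne f (h.forall_ne_of_lt hyv hvx)

theorem mem_chordInterval_of_cyclePlusChords (h : ChordsInterleaved x y) {m : Fin k}
    {u w : Fin n} (hu : u ∈ chordInterval x y m) (huw : cyclePlusChords n k x y u w)
    (hw : w ≠ finRotate n (x m)) : w ∈ chordInterval x y m := by
  rcases hu.2.lt_or_eq with hux | hux
  · rw [cyclePlusChords_iff_of_forall_ne (h.forall_ne_of_lt hu.1 hux)] at huw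
    subst huw
    have hyu := hu.1
    have hsucc := Fin.val_finRotate_of_lt (u := u) (by have := (x m).isLt; omega)
    exact ⟨by omega, by omega⟩
  · obtain rfl : u = x m := Fin.ext hux
    rcases (h.cyclePlusChords_chord_iff m).1 huw with hw' | rfl
    · exact absurd hw' hw
    · exact h.y_mem_chordInterval m

/-- If `u ∈ T` but its cycle successor is not, then the arc that keeps `u` inside `T` is a chord
`(x m, y m)`, and following the cycle from `y m` can only leave `T` at `x m`. -/
theorem exists_chordInterval_subset (h : ChordsInterleaved x y) {T : Set (Fin n)}
    (hT : T.Nonempty) (hT' : T ≠ Set.univ)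
    (hout : ∀ u ∈ T, ∃ w ∈ T, cyclePlusChords n k x y u w) :
    ∃ m, chordInterval x y m ⊆ T ∧ finRotate n (x m) ∉ T := by
  obtain ⟨u, hu, hsucc⟩ := Fin.exists_mem_finRotate_notMem hT hT'
  obtain ⟨w, hw, huw⟩ := hout u hu
  obtain ⟨m, rfl, rfl⟩ : ∃ m, u = x m ∧ w = y m :=
    (cyclePlusChords_iff.1 huw).resolve_left fun he => hsucc (he ▸ hw)
  refine ⟨m, fun v hv => Fin.interval_induction (fun v hv => Fin.ext hv ▸ hw) ?_ v hv.1 hv.2,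
    hsucc⟩
  intro v v' hyv hvx hv' hvT
  obtain ⟨w', hw'T, hvw'⟩ := hout v hvT
  rw [cyclePlusChords_iff_of_forall_ne (h.forall_ne_of_lt hyv hvx)] at hvw'
  have := Fin.val_finRotate_of_lt (u := v) (by have := (x m).isLt; omega)
  rwa [Fin.ext (hv'.trans this.symm), ← hvw']

theorem stronglyConnected_chordInterval (h : ChordsInterleaved x y) (m : Fin k) :
    StronglyConnected (induceRel (cyclePlusChords n k x y) (chordInterval x y m)) := by
  intro u v
  have hchord : induceRel (cyclePlusChords n k x y) (chordInterval x y m)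
      ⟨x m, h.x_mem_chordInterval m⟩ ⟨y m, h.y_mem_chordInterval m⟩ :=
    Or.inr (Or.inr ⟨m, rfl, rfl⟩)
  exact (reach_induceRel_chordInterval_of_le u.2.2).trans
    (Relation.ReflTransGen.head hchord (reach_induceRel_chordInterval_of_le v.2.1))

theorem eq_chordInterval_of_stronglyConnected (h : ChordsInterleaved x y) {S : Set (Fin n)}
    (hS' : S ≠ Set.univ) (hSC : StronglyConnected (induceRel (cyclePlusChords n k x y) S))
    {a b : Fin n} (ha : a ∈ S) (hb : b ∈ S) (hab : a ≠ b) :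
    ∃ m, S = chordInterval x y m := by
  obtain ⟨m, hsub, hsucc⟩ :=
    h.exists_chordInterval_subset ⟨a, ha⟩ hS' fun u hu => hSC.exists_adj ha hb hab hu
  refine ⟨m, Set.Subset.antisymm (fun v hv => ?_) hsub⟩
  have hyS := hsub (h.y_mem_chordInterval m)
  refine mem_of_reach_induceRel (C := chordInterval x y m) (a := ⟨y m, hyS⟩) (b := ⟨v, hv⟩)
    (fun u hu w hw huw => h.mem_chordInterval_of_cyclePlusChords hu huw ?_) (hSC _ _)
    (h.y_mem_chordInterval m)
  rintro rfl
  exact hsucc hw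

theorem stronglyConnected_induceRel_iff (h : ChordsInterleaved x y) {S : Set (Fin n)}
    (hS : S.Nonempty) (hS' : S ≠ Set.univ) :
    StronglyConnected (induceRel (cyclePlusChords n k x y) S) ↔
      (∃ v, S = {v}) ∨ ∃ m, S = chordInterval x y m := by
  refine ⟨fun hSC => ?_, ?_⟩
  · obtain ⟨a, ha⟩ := hS
    by_cases hsingle : ∃ b ∈ S, b ≠ a
    · obtain ⟨b, hb, hba⟩ := hsingle
      exact Or.inr (h.eq_chordInterval_of_stronglyConnected hS' hSC ha hb (Ne.symm hba))
    · exact Or.inl ⟨a, Set.eq_singleton_iff_unique_mem.2 ⟨ha, by simpa using hsingle⟩⟩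
  · rintro (⟨v, rfl⟩ | ⟨m, rfl⟩)
    · exact stronglyConnected_induceRel_singleton v
    · exact h.stronglyConnected_chordInterval m

theorem one_mem_compSpec (h : ChordsInterleaved x y) (m : Fin k) :
    (1 : ℝ) ∈ compSpec (adjMat (cyclePlusChords n k x y)) := by
  set I := chordInterval x y m
  have hrow : ∀ v ∈ I, (adjMat (cyclePlusChords n k x y) *ᵥ I.indicator 1) v = 1 := by
    intro v hv
    rcases hv.2.lt_or_eq with hvx | hvx
    · have hsucc := Fin.val_finRotate_of_lt (u := v) (by have := (x m).isLt; omega)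
      rw [h.adjMat_mulVec_apply_of_lt _ hv.1 hvx, Set.indicator_of_mem]
      · rfl
      · exact ⟨by have := hv.1; omega, by omega⟩
    · rw [show v = x m from Fin.ext hvx, h.adjMat_mulVec_apply_chord,
        Set.indicator_of_notMem (h.finRotate_notMem_chordInterval m),
        Set.indicator_of_mem (h.y_mem_chordInterval m)]
      simp
  refine (mem_compSpec_iff_of_nonneg (adjMat_nonneg _)).2 ⟨I.indicator 1, fun h0 => ?_,
    fun v => Set.indicator_nonneg (fun _ _ => zero_le_one) v, fun v hv => ?_⟩
  · exact (by simpa using congrFun h0 (y m) : y m ∉ I) (h.y_mem_chordInterval m)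
  · have hvI : v ∈ I := by by_contra hvI; exact hv (Set.indicator_of_notMem hvI _)
    rw [hrow v hvI, Set.indicator_of_mem hvI]
    simp

theorem apply_eq_pow_mul_of_mem_chordInterval (h : ChordsInterleaved x y) {m : Fin k}
    {z : Fin n → ℝ} {lam : ℝ} (hI : ∀ v ∈ chordInterval x y m, z v ≠ 0)
    (hz : ∀ i, z i ≠ 0 → (adjMat (cyclePlusChords n k x y) *ᵥ z) i = lam * z i) :
    ∀ v : Fin n, (y m).val ≤ v.val → v.val ≤ (x m).val →
      z v = lam ^ (v.val - (y m).val) * z (y m) := by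
  refine Fin.interval_induction (fun v hv => by simp [Fin.ext hv]) ?_
  intro v w hyv hvx hw ih
  have hsucc : finRotate n v = w :=
    Fin.ext ((Fin.val_finRotate_of_lt (by have := (x m).isLt; omega)).trans hw.symm)
  rw [show w.val - (y m).val = v.val - (y m).val + 1 by omega, ← hsucc,
    ← h.adjMat_mulVec_apply_of_lt z hyv hvx, hz v (hI v ⟨hyv, hvx.le⟩), ih, pow_succ]
  ring

/-- The support contains the interval of a chord and misses the cycle successor of its tail, so
the eigen-relation runs once around the induced cycle: `lam ^ (x m - y m + 1) = 1`. -/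
theorem eq_one_of_support_ne_univ (h : ChordsInterleaved x y) {z : Fin n → ℝ} {lam : ℝ}
    (hz0 : 0 ≤ z) (hT : {i | z i ≠ 0}.Nonempty) (hT' : {i | z i ≠ 0} ≠ Set.univ)
    (hz : ∀ i, z i ≠ 0 → (adjMat (cyclePlusChords n k x y) *ᵥ z) i = lam * z i)
    (hlam : lam ≠ 0) : lam = 1 := by
  have hout : ∀ u ∈ {i | z i ≠ 0}, ∃ w ∈ {i | z i ≠ 0},
      cyclePlusChords n k x y u w := by
    intro u hu
    obtain ⟨w, huw, hw⟩ := exists_adj_of_adjMat_mulVec_ne_zero _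
      (by rw [hz u hu]; exact mul_ne_zero hlam hu)
    exact ⟨w, hw, huw⟩
  obtain ⟨m, hsub, hsucc⟩ := h.exists_chordInterval_subset hT hT' hout
  have hzy : 0 < z (y m) := (hz0 _).lt_of_ne' (hsub (h.y_mem_chordInterval m))
  have hzx : 0 < z (x m) := (hz0 _).lt_of_ne' (hsub (h.x_mem_chordInterval m))
  have hchord : lam * z (x m) = z (y m) := by
    rw [← hz _ hzx.ne', h.adjMat_mulVec_apply_chord, not_not.1 hsucc, zero_add]
  have hpow : lam ^ ((x m).val - (y m).val + 1) * z (y m) = z (y m) := by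
    rw [pow_succ', mul_assoc, ← h.apply_eq_pow_mul_of_mem_chordInterval hsub hz _
      (h.lt m).le le_rfl, hchord]
  have hlam0 : 0 ≤ lam := (pos_of_mul_pos_left (hchord ▸ hzy) hzx.le).le
  rw [← pow_eq_one_iff_of_nonneg hlam0 (Nat.succ_ne_zero _)]
  exact (mul_eq_right₀ hzy.ne').1 hpow

theorem compSpec_subset (h : ChordsInterleaved x y) :
    compSpec (adjMat (cyclePlusChords n k x y)) ⊆ {0, 1, rho (cyclePlusChords n k x y)} := by
  intro lam hlam
  obtain ⟨z, hz, hz0, heq⟩ := (mem_compSpec_iff_of_nonneg (adjMat_nonneg _)).1 hlam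
  by_cases hlam0 : lam = 0
  · exact Or.inl hlam0
  obtain ⟨j, hj⟩ := Function.ne_iff.1 hz
  by_cases hT' : {i | z i ≠ 0} = Set.univ
  · have hpos : ∀ i, 0 < z i := fun i => (hz0 i).lt_of_ne' (hT' ▸ Set.mem_univ i :)
    have : Nonempty (Fin n) := ⟨j⟩
    refine Or.inr (Or.inr (matSpecRad_eq_of_pos_eigenvector (adjMat_nonneg _) hpos ?_).symm)
    ext i
    rw [heq i (hpos i).ne', Pi.smul_apply, smul_eq_mul]
  · exact Or.inr (Or.inl (h.eq_one_of_support_ne_univ hz0 ⟨j, hj⟩ hT' heq hlam0))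

end ChordsInterleaved

def chordLength {n k : ℕ} (x y : Fin k → Fin n) (m : Fin k) : ℕ := (x m).val + 1 - (y m).val

/-- The Perron vector, normalised to `1` at vertex `0`: solving `A v = c v` forward along the
cycle gives `v (u + 1) = c v u - v (y m)` at `u = x m`, so each passed chord contributes the
factor `1 - c ^ (-chordLength)`. Its value at `n` must return to `1` to close the cycle. -/
def perronWeight {n k : ℕ} (x y : Fin k → Fin n) (c : ℝ) (u : ℕ) : ℝ :=
  c ^ u * ∏ m ∈ Finset.univ.filter (fun m => (x m).val < u), (1 - (c ^ chordLength x y m)⁻¹)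

section PerronWeight

variable {n k : ℕ} {x y : Fin k → Fin n} {c : ℝ}

theorem perronWeight_zero : perronWeight x y c 0 = 1 := by
  simp [perronWeight]

theorem perronWeight_succ_of_forall_ne {u : ℕ} (hu : ∀ m, (x m).val ≠ u) :
    perronWeight x y c (u + 1) = c * perronWeight x y c u := by
  have hF : Finset.univ.filter (fun m => (x m).val < u + 1) =
      Finset.univ.filter (fun m => (x m).val < u) := by
    ext l
    have := hu l
    simp only [Finset.mem_filter, Finset.mem_univ, true_and]
    omega
  rw [perronWeight, perronWeight, hF, pow_succ]
  ring

theorem ChordsInterleaved.chordLength_ne_zero (h : ChordsInterleaved x y) (m : Fin k) :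
    chordLength x y m ≠ 0 := by
  have := h.lt m
  unfold chordLength
  omega

theorem ChordsInterleaved.perronWeight_succ_chord (h : ChordsInterleaved x y) (hc : c ≠ 0)
    (m : Fin k) : perronWeight x y c ((x m).val + 1) =
      c * perronWeight x y c (x m).val - perronWeight x y c (y m).val := by
  have hF : Finset.univ.filter (fun l => (x l).val < (x m).val + 1) =
      insert m (Finset.univ.filter (fun l => (x l).val < (x m).val)) := by
    ext l
    simp only [Finset.mem_filter, Finset.mem_univ, true_and, Finset.mem_insert]
    refine ⟨fun hl => (Nat.lt_succ_iff.1 hl).eq_or_lt.imp (fun he => ?_) id, ?_⟩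
    · exact h.injective (Fin.ext he)
    · rintro (rfl | hl) <;> omega
  have hFy : Finset.univ.filter (fun l => (x l).val < (y m).val) =
      Finset.univ.filter (fun l => (x l).val < (x m).val) := by
    ext l
    simp only [Finset.mem_filter, Finset.mem_univ, true_and]
    refine ⟨fun hl => hl.trans (h.lt m), fun hl => ?_⟩
    by_contra hyl
    obtain rfl := h.eq_of_mem_chordInterval (m := m) ⟨not_lt.1 hyl, hl.le⟩
    exact lt_irrefl _ hl
  have hlen : (x m).val + 1 = (y m).val + chordLength x y m := by
    have := h.lt m
    unfold chordLength
    omega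
  set P := ∏ l ∈ Finset.univ.filter (fun l => (x l).val < (x m).val),
    (1 - (c ^ chordLength x y l)⁻¹)
  have hfactor : c ^ chordLength x y m * (1 - (c ^ chordLength x y m)⁻¹) =
      c ^ chordLength x y m - 1 := by
    rw [mul_sub, mul_inv_cancel₀ (pow_ne_zero _ hc), mul_one]
  rw [perronWeight, perronWeight, perronWeight, hF, hFy, Finset.prod_insert (by simp),
    ← mul_assoc c, ← pow_succ', hlen, pow_add]
  linear_combination (c ^ (y m).val * P) * hfactor

theorem ChordsInterleaved.perronWeight_pos (h : ChordsInterleaved x y) (hc : 1 < c) (u : ℕ) :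
    0 < perronWeight x y c u := by
  refine mul_pos (pow_pos (by linarith) u) (Finset.prod_pos fun m _ => ?_)
  have : 1 < c ^ chordLength x y m := one_lt_pow₀ hc (h.chordLength_ne_zero m)
  linarith [inv_lt_one_of_one_lt₀ this]

/-- Intermediate value theorem on `[1, 2]`: the product vanishes at `c = 1`, and at `c = 2`
every factor is at least `1 / 2` while `k ≤ n`. -/
theorem ChordsInterleaved.exists_perronWeight_eq_one (h : ChordsInterleaved x y) (hk : 1 ≤ k) :
    ∃ c, 1 < c ∧ perronWeight x y c n = 1 := by
  have hF : Finset.univ.filter (fun m => (x m).val < n) = Finset.univ :=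
    Finset.filter_true_of_mem fun m _ => (x m).isLt
  have hcont : ContinuousOn (fun c => perronWeight x y c n) (Set.Icc 1 2) :=
    (continuousOn_pow n).mul (continuousOn_finsetProd _ fun m _ => continuousOn_const.sub
      ((continuousOn_pow _).inv₀ fun c hc => pow_ne_zero _ (by linarith [hc.1])))
  have h1 : perronWeight x y 1 n = 0 := by
    rw [perronWeight, hF]
    simp [Finset.prod_eq_zero (Finset.mem_univ (⟨0, hk⟩ : Fin k))]
  have h2 : 1 ≤ perronWeight x y 2 n := by
    have hkn : k ≤ n := by simpa using Fintype.card_le_of_injective x h.injective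
    have hfactor : ∀ m, (2⁻¹ : ℝ) ≤ 1 - ((2 : ℝ) ^ chordLength x y m)⁻¹ := fun m => by
      have : (2 : ℝ) ≤ 2 ^ chordLength x y m :=
        le_self_pow₀ (by norm_num) (h.chordLength_ne_zero m)
      linarith [inv_anti₀ (by norm_num) this]
    calc (1 : ℝ) ≤ 2 ^ n * (2 ^ k)⁻¹ := by
          rw [← div_eq_mul_inv, one_le_div₀ (by positivity)]
          exact pow_le_pow_right₀ (by norm_num) hkn
      _ ≤ perronWeight x y 2 n := by
          rw [perronWeight, hF]
          gcongr
          simpa using Finset.prod_le_prod (s := Finset.univ) (fun _ _ => by norm_num)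
            fun m _ => hfactor m
  obtain ⟨c, hc, hc1 : perronWeight x y c n = 1⟩ :=
    intermediate_value_Icc (by norm_num) hcont ⟨h1 ▸ zero_le_one, h2⟩
  refine ⟨c, hc.1.lt_of_ne fun he => ?_, hc1⟩
  rw [← he, h1] at hc1
  exact zero_ne_one hc1

end PerronWeight

theorem ChordsInterleaved.exists_pos_eigenvector {n k : ℕ} {x y : Fin k → Fin n}
    (h : ChordsInterleaved x y) (hk : 1 ≤ k) :
    ∃ c : ℝ, 1 < c ∧ ∃ v : Fin n → ℝ, (∀ i, 0 < v i) ∧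
      adjMat (cyclePlusChords n k x y) *ᵥ v = c • v := by
  obtain ⟨c, hc, hcn⟩ := h.exists_perronWeight_eq_one hk
  refine ⟨c, hc, fun u => perronWeight x y c u.val, fun u => h.perronWeight_pos hc _, ?_⟩
  have hrot : ∀ u : Fin n, perronWeight x y c (finRotate n u).val =
      perronWeight x y c (u.val + 1) := fun u => by
    rw [Fin.val_finRotate]
    split_ifs with hu
    · rw [hu, hcn, perronWeight_zero]
    · rfl
  ext u
  rw [Pi.smul_apply, smul_eq_mul]
  by_cases hu : ∀ m, x m ≠ u
  · rw [adjMat_cyclePlusChords_mulVec_apply_of_forall_ne _ hu, hrot,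
      perronWeight_succ_of_forall_ne fun m he => hu m (Fin.ext he)]
  · obtain ⟨m, rfl⟩ := not_forall_not.1 hu
    rw [h.adjMat_mulVec_apply_chord, hrot, h.perronWeight_succ_chord (by positivity)]
    ring

/-- for a directed cycle with `k ≥ 1` pairwise "interleaved" backward
chords `(x i, y i)` (with `0 < y i < x i` and `x i < y j` for `i < j`), the induced
strongly connected proper subdigraphs are exactly the single vertices and the `k`
directed cycles induced by the intervals `[y i, x i]`; consequently the digraph has
exactly the three complementarity eigenvalues `{0, 1, ρ(D)}`. -/
theorem stmt19 (n k : ℕ) (hk : 1 ≤ k) (x y : Fin k → Fin n)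
    (hy : ∀ i, 0 < (y i).val)
    (hyx : ∀ i, (y i).val < (x i).val)
    (hinter : ∀ i j : Fin k, (i : ℕ) < (j : ℕ) → (x i).val < (y j).val) :
    (∀ S : Set (Fin n), S.Nonempty → S ≠ Set.univ →
      (StronglyConnected (induceRel (cyclePlusChords n k x y) S) ↔
        ((∃ v, S = {v}) ∨
          ∃ i, S = {v : Fin n | (y i).val ≤ v.val ∧ v.val ≤ (x i).val}))) ∧
    compSpec (adjMat (cyclePlusChords n k x y)) = {0, 1, rho (cyclePlusChords n k x y)} ∧
    1 < rho (cyclePlusChords n k x y) ∧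
    (compSpec (adjMat (cyclePlusChords n k x y))).ncard = 3 := by
  have h : ChordsInterleaved x y := ⟨hy, hyx, hinter⟩
  obtain ⟨c, hc, v, hv, hAv⟩ := h.exists_pos_eigenvector hk
  have : Nonempty (Fin n) := ⟨x ⟨0, hk⟩⟩
  have hrho : rho (cyclePlusChords n k x y) = c :=
    matSpecRad_eq_of_pos_eigenvector (adjMat_nonneg _) hv hAv
  have hρ : 1 < rho (cyclePlusChords n k x y) := hrho ▸ hc
  have hspec : compSpec (adjMat (cyclePlusChords n k x y)) =
      {0, 1, rho (cyclePlusChords n k x y)} := by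
    refine h.compSpec_subset.antisymm ?_
    rintro lam (rfl | rfl | rfl)
    · exact zero_mem_compSpec_adjMat _ (h.not_cyclePlusChords_self ⟨0, hk⟩)
    · exact h.one_mem_compSpec ⟨0, hk⟩
    · exact hrho ▸ mem_compSpec_adjMat_of_pos_eigenvector _ hv hAv
  refine ⟨fun S hS hS' => h.stronglyConnected_induceRel_iff hS hS', hspec, hρ, ?_⟩
  rw [hspec, Set.ncard_eq_three]
  exact ⟨0, 1, _, zero_ne_one, by linarith, by linarith, rfl⟩
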